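/- arXiv:1807.08232 — 3 statements merged into one kernel-verified Lean document; each statement's English description precedes it below -/
import Mathlib

section
/- Let E/F be an unramified quadratic extension of p-adic fields with p odd, written E = F(δ) with δ² = Δ ∈ O_F^× \ (F^×)². Then the set {1 + ϖ_F δ x : x ∈ O_F} is a complete set of representatives for the quotient group (1 + p_E)/(1 + p_F), i.e. the map x ↦ (1 + ϖ_F δ x)(1 + p_F) is a bijection from O_F onto (1 + p_E)/(1 + p_F). -/
/-!
Since `O_E = O_F[δ]` is a valuation ring, `Δ` is not a square modulo `p_F`: if `Δ ≡ c²`, then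
`(δ - c)⁻¹ = (δ + c)/(Δ - c²) ∉ O_E` and likewise for `δ + c`, so both lie in `p_E` and so does
their difference `2c`, a unit. Taking norms, `a + bδ ∈ p_E` with `a, b ∈ O_F` forces `b ∈ p_F`
and then `a ∈ p_F`. Hence `u ∈ 1 + p_E` is `a + bδ` with `a ∈ 1 + p_F` and `b = ϖ a x`, i.e.
`u = (1 + ϖ δ x) a`; uniqueness of `x` is uniqueness of coordinates in the basis `1, δ`.
-/

theorem ValuationSubring.valuation_two_eq_one {K : Type*} [Field K] (A : ValuationSubring K)
    {p : ℕ} (hp : Odd p) (hpA : A.valuation p < 1) : A.valuation 2 = 1 := by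
  obtain ⟨k, rfl⟩ := hp
  refine (A.valuation_lt_one_or_eq_one 2).resolve_left fun h2 => ?_
  have h2k : A.valuation (2 * k : K) < 1 := by
    rw [map_mul]
    exact (mul_le_of_le_one_right' (by simp)).trans_lt h2
  -- `1 = p - 2k` would lie in the maximal ideal
  simpa using Valuation.map_sub_lt _ hpA h2k

theorem ValuationSubring.valuation_lt_one_iff_inv_notMem {K : Type*} [Field K]
    (A : ValuationSubring K) {x : K} (hx : x ≠ 0) : A.valuation x < 1 ↔ x⁻¹ ∉ A := by
  rw [← A.mem_nonunits_iff, A.mem_nonunits_iff_or, or_iff_right hx]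

section

variable {F E : Type*} [Field F] [Field E] [Algebra F E] {OF : ValuationSubring F}
  {OE : ValuationSubring E} {δ : E} {Δ : F}

theorem eq_and_eq_of_algebraMap_add_mul_eq (hδ : δ ^ 2 = algebraMap F E Δ) (hΔ : ¬IsSquare Δ)
    {a b a' b' : F}
    (h : algebraMap F E a + algebraMap F E b * δ = algebraMap F E a' + algebraMap F E b' * δ) :
    a = a' ∧ b = b' := by
  obtain rfl | hb := eq_or_ne b b'
  · exact ⟨(algebraMap F E).injective (add_right_cancel h), rfl⟩
  refine absurd ⟨(a' - a) / (b - b'), ?_⟩ hΔ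
  have hδ' : δ = algebraMap F E ((a' - a) / (b - b')) := by
    rw [map_div₀, map_sub, map_sub, eq_div_iff (by simpa [sub_eq_zero] using hb)]
    linear_combination h
  apply (algebraMap F E).injective
  rw [← hδ, hδ', sq, map_mul]

theorem mem_and_mem_of_algebraMap_add_mul_mem (hδ : δ ^ 2 = algebraMap F E Δ) (hΔ : ¬IsSquare Δ)
    (hOE : ∀ z : E, z ∈ OE ↔ ∃ a b : OF, z = algebraMap F E a + algebraMap F E b * δ)
    {a b : F} (h : algebraMap F E a + algebraMap F E b * δ ∈ OE) : a ∈ OF ∧ b ∈ OF := by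
  obtain ⟨a', b', h'⟩ := (hOE _).1 h
  obtain ⟨rfl, rfl⟩ := eq_and_eq_of_algebraMap_add_mul_eq hδ hΔ h'
  exact ⟨a'.2, b'.2⟩

theorem algebraMap_mem_iff (hδ : δ ^ 2 = algebraMap F E Δ) (hΔ : ¬IsSquare Δ)
    (hOE : ∀ z : E, z ∈ OE ↔ ∃ a b : OF, z = algebraMap F E a + algebraMap F E b * δ)
    {a : F} : algebraMap F E a ∈ OE ↔ a ∈ OF :=
  ⟨fun h => (mem_and_mem_of_algebraMap_add_mul_mem hδ hΔ hOE (b := 0) (by simpa using h)).1,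
    fun h => (hOE _).2 ⟨⟨a, h⟩, 0, by simp⟩⟩

theorem valuation_algebraMap_lt_one_iff (hδ : δ ^ 2 = algebraMap F E Δ) (hΔ : ¬IsSquare Δ)
    (hOE : ∀ z : E, z ∈ OE ↔ ∃ a b : OF, z = algebraMap F E a + algebraMap F E b * δ)
    {a : F} : OE.valuation (algebraMap F E a) < 1 ↔ OF.valuation a < 1 := by
  simp only [← ValuationSubring.mem_nonunits_iff, ValuationSubring.mem_nonunits_iff_or,
    map_eq_zero, ← map_inv₀, algebraMap_mem_iff hδ hΔ hOE]

theorem valuation_sqrt_sub_lt_one (hδ : δ ^ 2 = algebraMap F E Δ) (hΔ : ¬IsSquare Δ)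
    (hOE : ∀ z : E, z ∈ OE ↔ ∃ a b : OF, z = algebraMap F E a + algebraMap F E b * δ)
    {c : F} (hc : OF.valuation (Δ - c ^ 2) < 1) : OE.valuation (δ - algebraMap F E c) < 1 := by
  set d := Δ - c ^ 2
  have hd : d ≠ 0 := fun hd => hΔ ⟨c, by linear_combination hd⟩
  -- `(δ - c)⁻¹ = (c + δ) / d` has `δ`-coordinate `d⁻¹ ∉ O_F`
  have hinv : (δ - algebraMap F E c)⁻¹ = algebraMap F E (c / d) + algebraMap F E d⁻¹ * δ := by
    have hdd : algebraMap F E d⁻¹ * (algebraMap F E Δ - algebraMap F E c ^ 2) = 1 := by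
      rw [← map_pow, ← map_sub, ← map_mul, inv_mul_cancel₀ hd, map_one]
    rw [inv_eq_of_mul_eq_one_left, map_div₀, div_eq_mul_inv, ← map_inv₀]
    linear_combination (algebraMap F E d⁻¹) * hδ + hdd
  have hδc : δ - algebraMap F E c ≠ 0 := fun h => hd <| (algebraMap F E).injective <| by
    rw [map_zero, map_sub, ← hδ, sub_eq_zero.1 h, map_pow, sub_self]
  rw [OE.valuation_lt_one_iff_inv_notMem hδc, hinv]
  exact fun h => (OF.valuation_lt_one_iff_inv_notMem hd).1 hc
    (mem_and_mem_of_algebraMap_add_mul_mem hδ hΔ hOE h).2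

theorem not_valuation_sub_sq_lt_one (hδ : δ ^ 2 = algebraMap F E Δ) (hΔ : ¬IsSquare Δ)
    (hOE : ∀ z : E, z ∈ OE ↔ ∃ a b : OF, z = algebraMap F E a + algebraMap F E b * δ)
    (hΔ1 : OF.valuation Δ = 1) (h2 : OF.valuation 2 = 1) {c : F} (hc : c ∈ OF) :
    ¬OF.valuation (Δ - c ^ 2) < 1 := by
  intro h
  have hc2 : OF.valuation (c ^ 2) = 1 := by
    rw [← hΔ1, ← sub_sub_cancel Δ (c ^ 2), Valuation.map_sub_eq_of_lt_left _ (hΔ1 ▸ h)]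
  have h2c : OF.valuation (2 * c) < 1 := by
    rw [← valuation_algebraMap_lt_one_iff hδ hΔ hOE]
    convert Valuation.map_sub_lt _
      (valuation_sqrt_sub_lt_one hδ hΔ hOE (c := -c) (by rwa [neg_sq]))
      (valuation_sqrt_sub_lt_one hδ hΔ hOE h) using 2
    simp only [map_mul, map_neg, map_ofNat]
    ring
  have h2cc : OF.valuation (2 * c * c) < 1 := by
    rw [map_mul]
    exact (mul_le_of_le_one_right' ((OF.valuation_le_one_iff c).2 hc)).trans_lt h2c
  rw [mul_assoc, ← sq, map_mul, h2, hc2, mul_one] at h2cc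
  exact lt_irrefl _ h2cc

theorem valuation_lt_one_of_valuation_add_mul_lt_one
    (hδ : δ ^ 2 = algebraMap F E Δ) (hΔ : ¬IsSquare Δ)
    (hOE : ∀ z : E, z ∈ OE ↔ ∃ a b : OF, z = algebraMap F E a + algebraMap F E b * δ)
    (hΔ1 : OF.valuation Δ = 1) (h2 : OF.valuation 2 = 1) {a b : F} (ha : a ∈ OF) (hb : b ∈ OF)
    (h : OE.valuation (algebraMap F E a + algebraMap F E b * δ) < 1) :
    OF.valuation a < 1 ∧ OF.valuation b < 1 := by
  have hb1 : OF.valuation b < 1 := by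
    refine (OF.valuation_lt_one_or_eq_one ⟨b, hb⟩).resolve_right fun hb1 => ?_
    have hbar : algebraMap F E a - algebraMap F E b * δ ∈ OE :=
      (hOE _).2 ⟨⟨a, ha⟩, -⟨b, hb⟩, by push_cast; ring⟩
    have hN : OF.valuation (a ^ 2 - Δ * b ^ 2) < 1 := by
      rw [← valuation_algebraMap_lt_one_iff hδ hΔ hOE]
      convert (mul_le_of_le_one_right' ((OE.valuation_le_one_iff _).2 hbar)).trans_lt h using 1
      rw [← map_mul]
      congr 1
      simp only [map_sub, map_mul, map_pow]
      linear_combination (algebraMap F E b) ^ 2 * hδ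
    have hb0 : b ≠ 0 := by rintro rfl; simp at hb1
    refine not_valuation_sub_sq_lt_one hδ hΔ hOE hΔ1 h2 (c := a / b) ?_ ?_
    · rw [← OF.valuation_le_one_iff, map_div₀, hb1, div_one, OF.valuation_le_one_iff]
      exact ha
    · have : Δ - (a / b) ^ 2 = -(a ^ 2 - Δ * b ^ 2) / b ^ 2 := by field_simp; ring
      rwa [this, map_div₀, Valuation.map_neg, map_pow, hb1, one_pow, div_one]
  have hbδ : OE.valuation (algebraMap F E b * δ) < 1 := by
    have hδ1 : OE.valuation δ ≤ 1 := (OE.valuation_le_one_iff δ).2 ((hOE δ).2 ⟨0, 1, by simp⟩)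
    rw [map_mul]
    exact (mul_le_of_le_one_right' hδ1).trans_lt ((valuation_algebraMap_lt_one_iff hδ hΔ hOE).2 hb1)
  refine ⟨?_, hb1⟩
  rw [← valuation_algebraMap_lt_one_iff hδ hΔ hOE, ← add_sub_cancel_right (algebraMap F E a)
    (algebraMap F E b * δ)]
  exact Valuation.map_sub_lt _ h hbδ

end

theorem stmt_1_general {p : ℕ} (hp : p.Prime) (hp2 : p ≠ 2)
    {F E : Type*} [Field F] [Field E] [Algebra F E]
    (OF : ValuationSubring F) (OE : ValuationSubring E)
    [IsDiscreteValuationRing OF]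
    (hpF : OF.valuation (p : F) < 1)
    (δ : E) (Δ : OF) (hδ : δ ^ 2 = algebraMap F E (Δ : F))
    (hΔu : IsUnit Δ) (hΔns : ¬ IsSquare ((Δ : F)))
    (hOE : ∀ z : E, z ∈ OE ↔ ∃ a b : OF,
      z = algebraMap F E (a : F) + algebraMap F E (b : F) * δ)
    (ϖ : OF) (hϖ : Irreducible ϖ) :
    ∀ u : E, OE.valuation (u - 1) < 1 →
      ∃! x : OF, ∃ f : F, OF.valuation (f - 1) < 1 ∧
        u = (1 + algebraMap F E ((ϖ : F)) * δ * algebraMap F E ((x : F)))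
              * algebraMap F E f := by
  have h2 := OF.valuation_two_eq_one (hp.odd_of_ne_two hp2) hpF
  have hΔ1 := (OF.valuation_eq_one_iff Δ).1 hΔu
  intro u hu
  obtain ⟨a, b, rfl⟩ := (hOE u).1 <| by
    simpa using OE.add_mem _ _ ((OE.valuation_le_one_iff _).1 hu.le) OE.one_mem
  obtain ⟨ha, hb⟩ := valuation_lt_one_of_valuation_add_mul_lt_one hδ hΔns hOE hΔ1 h2
    (sub_mem a.2 OF.one_mem) b.2 (by convert hu using 2; simp only [map_sub, map_one]; ring)
  obtain ⟨a, rfl⟩ : IsUnit a := (OF.valuation_eq_one_iff a).2 <| by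
    simpa using Valuation.map_one_add_of_lt _ ha
  obtain ⟨y, rfl⟩ := Ideal.mem_span_singleton'.1 <|
    hϖ.maximalIdeal_eq ▸ (OF.valuation_lt_one_iff b).2 hb
  refine ⟨y * ↑a⁻¹, ⟨a, ha, ?_⟩, ?_⟩
  · have hinv : algebraMap F E ((a⁻¹ : OFˣ) : OF) * algebraMap F E ((a : OF) : F) = 1 := by
      rw [← map_mul, ← Subring.coe_mul, Units.inv_mul, OneMemClass.coe_one, map_one]
    simp only [MulMemClass.coe_mul, map_mul]
    linear_combination -(algebraMap F E y * algebraMap F E ϖ * δ) * hinv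
  · rintro x ⟨f, -, hf⟩
    obtain ⟨rfl, h⟩ := eq_and_eq_of_algebraMap_add_mul_eq hδ hΔns
      (a' := f) (b' := ϖ * x * f) (by rw [hf]; simp only [map_mul]; ring)
    have h : ϖ * y = ϖ * (x * a) := by rw [mul_comm ϖ y, ← mul_assoc]; exact_mod_cast h
    rw [Units.eq_mul_inv_iff_mul_eq, mul_left_cancel₀ hϖ.ne_zero h]

/-- Let `E/F` be an unramified quadratic extension of `p`-adic fields with `p`
odd, written `E = F(δ)` with `δ² = Δ ∈ O_F^× \ (F^×)²` (and `O_E = O_F[δ]`).  Then the set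
`{1 + ϖ_F δ x : x ∈ O_F}` is a complete set of representatives for `(1 + p_E)/(1 + p_F)`:
for every `u ∈ 1 + p_E` there is a unique `x ∈ O_F` with `(1 + ϖ_F δ x)(1 + p_F) = u(1 + p_F)`. -/
theorem stmt_1 {p : ℕ} (hp : p.Prime) (hp2 : p ≠ 2)
    {F E : Type*} [Field F] [Field E] [Algebra F E]
    (hdim : Module.finrank F E = 2)
    (OF : ValuationSubring F) (OE : ValuationSubring E)
    [IsDomain OF] [IsDiscreteValuationRing OF]
    (hpF : OF.valuation (p : F) < 1)
    (δ : E) (Δ : OF) (hδ : δ ^ 2 = algebraMap F E (Δ : F))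
    (hΔu : IsUnit Δ) (hΔns : ¬ IsSquare ((Δ : F)))
    (hOE : ∀ z : E, z ∈ OE ↔ ∃ a b : OF,
      z = algebraMap F E (a : F) + algebraMap F E (b : F) * δ)
    (ϖ : OF) (hϖ : Irreducible ϖ) :
    ∀ u : E, OE.valuation (u - 1) < 1 →
      ∃! x : OF, ∃ f : F, OF.valuation (f - 1) < 1 ∧
        u = (1 + algebraMap F E ((ϖ : F)) * δ * algebraMap F E ((x : F)))
              * algebraMap F E f :=
  stmt_1_general hp hp2 OF OE hpF δ Δ hδ hΔu hΔns hOE ϖ hϖ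
end

section
/- Let φ be a representation of W_E, χ a character of W_E of depth zero, and define θ(φ) = (φ ⊗ χ') ⊕ χ where χ' is also a depth-zero character. If depth(φ) > 0 then depth(θ(φ)) = depth(φ); if depth(φ) = 0 then depth(θ(φ)) = 0. -/
/-- The depth of a (linear) action of `G` with respect to a decreasing filtration
`Gp : ℝ → Subgroup G` (where `Gp r` models the ramification subgroup `G^{r+}`):
the infimum of the `r ≥ 0` such that the action is trivial on `G^{r+}`. -/
noncomputable def depthOf {G V : Type*} [Group G] [AddCommGroup V] [Module ℂ V]
    (Gp : ℝ → Subgroup G) (ρ : G → Module.End ℂ V) : ℝ :=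
  sInf {r : ℝ | 0 ≤ r ∧ ∀ g ∈ Gp r, ρ g = 1}

theorem LinearMap.prodMap_eq_one_iff {R M N : Type*} [Semiring R] [AddCommMonoid M]
    [AddCommMonoid N] [Module R M] [Module R N] {f : Module.End R M} {g : Module.End R N} :
    f.prodMap g = 1 ↔ f = 1 ∧ g = 1 := by
  refine ⟨fun h => ⟨?_, ?_⟩, fun ⟨hf, hg⟩ => hf ▸ hg ▸ LinearMap.prodMap_one⟩
  · ext v
    simpa using congrArg Prod.fst (LinearMap.congr_fun h (v, 0))
  · ext w
    simpa using congrArg Prod.snd (LinearMap.congr_fun h (0, w))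

theorem depthOf_congr {G V W : Type*} [Group G] [AddCommGroup V] [Module ℂ V]
    [AddCommGroup W] [Module ℂ W] (Gp : ℝ → Subgroup G)
    {ρ : G → Module.End ℂ V} {ρ' : G → Module.End ℂ W}
    (h : ∀ r, 0 ≤ r → ((∀ g ∈ Gp r, ρ g = 1) ↔ ∀ g ∈ Gp r, ρ' g = 1)) :
    depthOf Gp ρ = depthOf Gp ρ' := by
  unfold depthOf
  congr 1
  ext r
  exact and_congr_right (h r)

theorem depthOf_prodMap_twist {G V : Type*} [Group G] [AddCommGroup V] [Module ℂ V]
    (Gp : ℝ → Subgroup G) (hGp : ∀ r, 0 ≤ r → Gp r ≤ Gp 0)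
    (φ : G → Module.End ℂ V) (χ χ' : G → ℂˣ)
    (hχ : ∀ g ∈ Gp 0, χ g = 1) (hχ' : ∀ g ∈ Gp 0, χ' g = 1) :
    depthOf Gp (fun g => LinearMap.prodMap ((χ' g : ℂ) • φ g) ((χ g : ℂ) • (1 : Module.End ℂ ℂ)))
      = depthOf Gp φ := by
  refine depthOf_congr Gp fun r hr => forall₂_congr fun g hg => ?_
  have hg0 : g ∈ Gp 0 := hGp r hr hg
  simp [hχ g hg0, hχ' g hg0, LinearMap.prodMap_eq_one_iff]

theorem stmt_17_general {G V : Type*} [Group G] [AddCommGroup V] [Module ℂ V]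
    (Gp : ℝ → Subgroup G) (hmono : ∀ {r s : ℝ}, r ≤ s → Gp s ≤ Gp r)
    (φ : G →* Module.End ℂ V) (χ χ' : G →* ℂˣ)
    (hχ : ∀ g ∈ Gp 0, χ g = 1) (hχ' : ∀ g ∈ Gp 0, χ' g = 1) :
    (0 < depthOf Gp (fun g => φ g) →
      depthOf Gp
          (fun g => LinearMap.prodMap ((χ' g : ℂ) • φ g) ((χ g : ℂ) • (1 : Module.End ℂ ℂ)))
        = depthOf Gp (fun g => φ g)) ∧
    (depthOf Gp (fun g => φ g) = 0 →
      depthOf Gp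
          (fun g => LinearMap.prodMap ((χ' g : ℂ) • φ g) ((χ g : ℂ) • (1 : Module.End ℂ ℂ)))
        = 0) := by
  have h := depthOf_prodMap_twist Gp (fun _ hr => hmono hr) φ χ χ' hχ hχ'
  exact ⟨fun _ => h, fun h0 => h.trans h0⟩

/-- Let `φ` be a representation of `W_E` (of finite depth), `χ, χ'`
depth-zero characters (trivial on `G^{0+}`), and `θ(φ) = (φ ⊗ χ') ⊕ χ`.  If
`depth φ > 0` then `depth θ(φ) = depth φ`; if `depth φ = 0` then `depth θ(φ) = 0`. -/
theorem stmt_17 {G V : Type*} [Group G] [AddCommGroup V] [Module ℂ V]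
    (Gp : ℝ → Subgroup G) (hmono : ∀ {r s : ℝ}, r ≤ s → Gp s ≤ Gp r)
    (φ : G →* Module.End ℂ V) (χ χ' : G →* ℂˣ)
    (hχ : ∀ g ∈ Gp 0, χ g = 1) (hχ' : ∀ g ∈ Gp 0, χ' g = 1)
    (hfin : ∃ r : ℝ, 0 ≤ r ∧ ∀ g ∈ Gp r, φ g = 1) :
    (0 < depthOf Gp (fun g => φ g) →
      depthOf Gp
          (fun g => LinearMap.prodMap ((χ' g : ℂ) • φ g) ((χ g : ℂ) • (1 : Module.End ℂ ℂ)))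
        = depthOf Gp (fun g => φ g)) ∧
    (depthOf Gp (fun g => φ g) = 0 →
      depthOf Gp
          (fun g => LinearMap.prodMap ((χ' g : ℂ) • φ g) ((χ g : ℂ) • (1 : Module.End ℂ ℂ)))
        = 0) :=
  stmt_17_general Gp hmono φ χ χ' hχ hχ'
end

section
/- Let E/F be a quadratic extension of p-adic fields with p odd, E = F(δ), δ² = Δ. For t ∈ E^1 with t ≡ 1 mod p_E, the element k_t (the unique representative 1 + ϖ_F δ b or 1 + δ b as in the unramified/ramified case) satisfies: the assignment t ↦ k_t is a section of the natural surjection 1 + p_E → (1 + p_E)/(1 + p_F) ≅ E^1 ∩ (1 + p_E), i.e. k_t/τ(k_t) = t for all such t, and k_1 = 1. -/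
/-!
Write `t = a + bδ` with `a, b ∈ O_F`. Since `t τ(t) = 1`, i.e. `a² - b²Δ = 1`, we get
`(t - 1)(τ(t) - 1) = 2(1 - a)`; as `2` is a unit, `t ≡ 1 mod p_E` forces `a ≡ 1 mod p_F`. Hence
`1 + a` is a unit and `b²Δ = (a - 1)(a + 1)` is not, so `c ∣ b` in both cases. Comparing
coordinates in the basis `1, δ`, the equation `k/τ(k) = t` for `k = 1 + fδ` reduces to
`f(1 + a) = b`, whose unique solution `f = b/(1 + a)` lies in `c O_F`.
-/

section Coordinates

variable {F E : Type*} [Field F] [Field E] [Algebra F E] {δ : E} {Δ : F}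

theorem algebraMap_add_mul_inj (hΔ : ¬IsSquare Δ) (hδ : δ ^ 2 = algebraMap F E Δ)
    {u v u' v' : F}
    (h : algebraMap F E u + algebraMap F E v * δ = algebraMap F E u' + algebraMap F E v' * δ) :
    u = u' ∧ v = v' := by
  obtain rfl : v = v' := by
    by_contra hv
    have hvv : algebraMap F E (v - v') ≠ 0 := by simpa [sub_eq_zero] using hv
    have hδF : δ = algebraMap F E ((u' - u) / (v - v')) := by
      rw [map_div₀, eq_div_iff hvv, map_sub, map_sub]
      linear_combination h
    exact hΔ ⟨_, (algebraMap F E).injective (by rw [← hδ, hδF, map_mul, sq])⟩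
  exact ⟨(algebraMap F E).injective (by simpa using h), rfl⟩

variable (τ : E ≃ₐ[F] E)

theorem conj_algebraMap_add_mul (hτδ : τ δ = -δ) (a b : F) :
    τ (algebraMap F E a + algebraMap F E b * δ) = algebraMap F E a - algebraMap F E b * δ := by
  rw [map_add, map_mul, τ.commutes, τ.commutes, hτδ]
  ring

theorem algebraMap_add_mul_mul_conj (hτδ : τ δ = -δ) (hδ : δ ^ 2 = algebraMap F E Δ)
    (a b : F) :
    (algebraMap F E a + algebraMap F E b * δ) * τ (algebraMap F E a + algebraMap F E b * δ) =
      algebraMap F E (a ^ 2 - b ^ 2 * Δ) := by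
  rw [conj_algebraMap_add_mul τ hτδ, map_sub, map_mul, map_pow, map_pow, ← hδ]
  ring

theorem one_add_mul_div_conj_eq_iff (hτδ : τ δ = -δ) (hΔ : ¬IsSquare Δ)
    (hδ : δ ^ 2 = algebraMap F E Δ) {t : E} {a b : F}
    (ht : t = algebraMap F E a + algebraMap F E b * δ)
    (hN : a ^ 2 - b ^ 2 * Δ = 1) (ha : 1 + a ≠ 0) (f : F) :
    (1 + algebraMap F E f * δ) / τ (1 + algebraMap F E f * δ) = t ↔ f * (1 + a) = b := by
  have hone : (1 : E) = algebraMap F E 1 := (map_one _).symm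
  have hconj : τ (1 + algebraMap F E f * δ) = algebraMap F E 1 + algebraMap F E (-f) * δ := by
    rw [hone, conj_algebraMap_add_mul τ hτδ, map_neg]
    ring
  have hconj0 : τ (1 + algebraMap F E f * δ) ≠ 0 := by
    intro h
    have h0 : algebraMap F E 1 + algebraMap F E (-f) * δ =
        algebraMap F E 0 + algebraMap F E 0 * δ := by
      rw [← hconj, h]
      simp
    exact one_ne_zero (algebraMap_add_mul_inj hΔ hδ h0).1
  have hprod : t * τ (1 + algebraMap F E f * δ) =
      algebraMap F E (a - f * b * Δ) + algebraMap F E (b - f * a) * δ := by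
    rw [hconj, ht]
    simp only [map_sub, map_mul, map_neg, map_one]
    linear_combination (-(algebraMap F E b * algebraMap F E f)) * hδ
  rw [div_eq_iff hconj0, hprod, hone]
  constructor
  · intro h
    linear_combination (algebraMap_add_mul_inj hΔ hδ h).2
  · intro h
    have h1 : 1 = a - f * b * Δ := mul_left_cancel₀ ha (by linear_combination -hN + b * Δ * h)
    rw [← h1, ← h]
    congr 3
    ring

end Coordinates

theorem ValuationSubring.isUnit_natCast_of_coprime {K : Type*} [Field K] (A : ValuationSubring K)
    {m n : ℕ} (hmn : m.Coprime n) (hn : A.valuation n < 1) : IsUnit (m : A) := by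
  obtain ⟨u, v, huv⟩ := hmn.isCoprime.map (Int.castRingHom A)
  simp only [eq_intCast, Int.cast_natCast] at huv
  rcases IsLocalRing.isUnit_or_isUnit_of_isUnit_add (huv ▸ isUnit_one) with h | h
  · exact isUnit_of_mul_isUnit_right h
  · have := (A.valuation_eq_one_iff _).1 (isUnit_of_mul_isUnit_right h)
    simp_all

theorem Irreducible.dvd_of_not_isUnit {R : Type*} [CommMonoid R] [PreValuationRing R] {c b : R}
    (hc : Irreducible c) (hb : ¬IsUnit b) : c ∣ b := by
  rcases ValuationRing.dvd_total c b with h | ⟨d, rfl⟩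
  · exact h
  · exact (hc.isUnit_or_isUnit rfl).elim (absurd · hb) fun hd => (hd.mul_right_dvd).2 dvd_rfl

theorem dvd_of_sq_sub_sq_mul_eq_one {R : Type*} [CommRing R] [PreValuationRing R] {a b c Δ : R}
    (hcase : (IsUnit Δ ∧ Irreducible c) ∨ (Irreducible Δ ∧ c = 1))
    (hN : a ^ 2 - b ^ 2 * Δ = 1) (ha : ¬IsUnit (a - 1)) : c ∣ b := by
  rcases hcase with ⟨hΔ, hc⟩ | ⟨-, rfl⟩
  · refine hc.dvd_of_not_isUnit fun hb => ha (isUnit_of_mul_isUnit_left (y := 1 + a) ?_)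
    rw [show (a - 1) * (1 + a) = b ^ 2 * Δ by linear_combination hN]
    exact (hb.pow 2).mul hΔ
  · exact one_dvd b

section Valuation

variable {F E : Type*} [Field F] [Field E] [Algebra F E] {OF : ValuationSubring F}
  {OE : ValuationSubring E}

theorem valuation_algebraMap_of_isUnit (hOF : ∀ u : OF, algebraMap F E u ∈ OE) {u : OF}
    (hu : IsUnit u) : OE.valuation (algebraMap F E u) = 1 :=
  (OE.valuation_eq_one_iff _).1
    (hu.map (((algebraMap F E).comp OF.subtype).codRestrict OE hOF))

theorem not_isUnit_sub_one_of_mul_conj_eq_one {δ : E} (τ : E ≃ₐ[F] E) (hτδ : τ δ = -δ)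
    (hOE : ∀ z : E, z ∈ OE ↔ ∃ a b : OF, z = algebraMap F E a + algebraMap F E b * δ)
    (h2 : IsUnit (2 : OF)) {t : E} {a b : OF}
    (ht : t = algebraMap F E a + algebraMap F E b * δ) (hnorm : t * τ t = 1)
    (hv : OE.valuation (t - 1) < 1) : ¬IsUnit (a - 1) := by
  have hτt := conj_algebraMap_add_mul τ hτδ a b
  rw [← ht] at hτt
  have hconj : τ t - 1 ∈ OE := (hOE _).2 ⟨a - 1, -b, by rw [hτt]; push_cast; ring⟩
  have hprod : (t - 1) * (τ t - 1) = algebraMap F E ((-2 * (a - 1) : OF) : F) := by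
    rw [show ((-2 * (a - 1) : OF) : F) = -2 * ((a : F) - 1) by norm_cast]
    simp only [map_mul, map_neg, map_sub, map_one, map_ofNat]
    linear_combination hnorm - ht - hτt
  intro hu
  have h1 := valuation_algebraMap_of_isUnit (fun u => (hOE _).2 ⟨u, 0, by simp⟩) (h2.neg.mul hu)
  have hlt : OE.valuation ((t - 1) * (τ t - 1)) < 1 := by
    rw [map_mul]
    exact mul_lt_one_of_lt_of_le hv ((OE.valuation_le_one_iff _).2 hconj)
  rw [hprod, h1] at hlt
  exact lt_irrefl _ hlt

theorem existsUnique_one_add_mul_div_conj_eq {δ : E} {Δ c : OF} (τ : E ≃ₐ[F] E)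
    (hτδ : τ δ = -δ) (hΔ : ¬IsSquare (Δ : F)) (hδ : δ ^ 2 = algebraMap F E Δ)
    (hOE : ∀ z : E, z ∈ OE ↔ ∃ a b : OF, z = algebraMap F E a + algebraMap F E b * δ)
    (h2 : IsUnit (2 : OF)) (hcase : (IsUnit Δ ∧ Irreducible c) ∨ (Irreducible Δ ∧ c = 1))
    {t : E} (hnorm : t * τ t = 1) (hv : OE.valuation (t - 1) < 1) :
    ∃! x : OF, (1 + algebraMap F E c * δ * algebraMap F E x) /
      τ (1 + algebraMap F E c * δ * algebraMap F E x) = t := by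
  obtain ⟨a, b, ht⟩ := (hOE t).1 <| by
    simpa using OE.add_mem _ _ ((OE.valuation_le_one_iff _).1 hv.le) OE.one_mem
  have hN : (a : F) ^ 2 - (b : F) ^ 2 * Δ = 1 := (algebraMap F E).injective <| by
    rw [← algebraMap_add_mul_mul_conj τ hτδ hδ, ← ht, hnorm, map_one]
  have ha1 := not_isUnit_sub_one_of_mul_conj_eq_one τ hτδ hOE h2 ht hnorm hv
  have ha : IsUnit (1 + a) :=
    (IsLocalRing.isUnit_or_isUnit_of_isUnit_add (a := 1 + a) (b := -(a - 1))
      (by ring_nf; exact h2)).resolve_right (by rwa [IsUnit.neg_iff])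
  obtain ⟨b', rfl⟩ := dvd_of_sq_sub_sq_mul_eq_one hcase (by exact_mod_cast hN) ha1
  have hc0 : c ≠ 0 := hcase.elim (fun h => h.2.ne_zero) fun h => h.2 ▸ one_ne_zero
  have hiff : ∀ x : OF, (1 + algebraMap F E c * δ * algebraMap F E x) /
      τ (1 + algebraMap F E c * δ * algebraMap F E x) = t ↔ x = b' * ↑ha.unit⁻¹ := by
    intro x
    rw [show 1 + algebraMap F E c * δ * algebraMap F E x = 1 + algebraMap F E (c * x : OF) * δ by
        rw [Subring.coe_mul .., map_mul]; ring,
      one_add_mul_div_conj_eq_iff τ hτδ hΔ hδ ht (by exact_mod_cast hN)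
        (by exact_mod_cast ha.ne_zero),
      Units.eq_mul_inv_iff_mul_eq, IsUnit.unit_spec, ← mul_right_inj' hc0, ← mul_assoc]
    exact_mod_cast Iff.rfl
  exact ⟨_, (hiff _).2 rfl, fun y hy => (hiff y).1 hy⟩

end Valuation

theorem stmt_19_general {p : ℕ} (hp : p.Prime) (hp2 : p ≠ 2)
    {F E : Type*} [Field F] [Field E] [Algebra F E]
    (OF : ValuationSubring F) (OE : ValuationSubring E)
    (hpF : OF.valuation (p : F) < 1)
    (τ : E ≃ₐ[F] E) (δ : E) (Δ : OF)
    (hδ : δ ^ 2 = algebraMap F E (Δ : F)) (hτδ : τ δ = -δ)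
    (hΔns : ¬ IsSquare ((Δ : F)))
    (hOE : ∀ z : E, z ∈ OE ↔ ∃ a b : OF,
      z = algebraMap F E (a : F) + algebraMap F E (b : F) * δ)
    (c : OF)
    (hcase : (IsUnit Δ ∧ Irreducible c) ∨ (Irreducible Δ ∧ c = 1)) :
    (∀ t : E, t * τ t = 1 → OE.valuation (t - 1) < 1 →
      ∃! x : OF,
        (1 + algebraMap F E (c : F) * δ * algebraMap F E (x : F)) /
          τ (1 + algebraMap F E (c : F) * δ * algebraMap F E (x : F)) = t) ∧
    (∀ x : OF,
      (1 + algebraMap F E (c : F) * δ * algebraMap F E (x : F)) /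
          τ (1 + algebraMap F E (c : F) * δ * algebraMap F E (x : F)) = 1 → x = 0) := by
  have h2 : IsUnit (2 : OF) := by
    exact_mod_cast OF.isUnit_natCast_of_coprime
      ((Nat.coprime_primes Nat.prime_two hp).2 hp2.symm) hpF
  have main := fun t : E =>
    existsUnique_one_add_mul_div_conj_eq (t := t) τ hτδ hΔns hδ hOE h2 hcase
  refine ⟨main, fun x hx => ?_⟩
  obtain ⟨_, -, huniq⟩ := main 1 (by simp) (by simp)
  exact (huniq x hx).trans (huniq 0 (by simp)).symm

/-- Let `E/F` be a quadratic extension of `p`-adic fields with `p` odd,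
`E = F(δ)`, `δ² = Δ`, `O_E = O_F[δ]`, `τ(δ) = -δ`.  Write the representative set as
`{1 + c δ x : x ∈ O_F}`, where `c = ϖ_F` (a uniformizer) and `Δ` is a unit in the unramified
case, and `c = 1` and `Δ` is a uniformizer in the ramified case.  Then `t ↦ k_t` is a section
of the surjection `1 + p_E → (1 + p_E)/(1 + p_F) ≅ E^1 ∩ (1 + p_E)`: every `t ∈ E^1` with
`t ≡ 1 mod p_E` equals `k/τ(k)` for a unique representative `k = 1 + c δ x`, and `k_1 = 1`
(the representative with ratio `1` is the one with `x = 0`). -/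
theorem stmt_19 {p : ℕ} (hp : p.Prime) (hp2 : p ≠ 2)
    {F E : Type*} [Field F] [Field E] [Algebra F E]
    (hdim : Module.finrank F E = 2)
    (OF : ValuationSubring F) (OE : ValuationSubring E)
    [IsDomain OF] [IsDiscreteValuationRing OF]
    (hpF : OF.valuation (p : F) < 1)
    (τ : E ≃ₐ[F] E) (δ : E) (Δ : OF)
    (hδ : δ ^ 2 = algebraMap F E (Δ : F)) (hτδ : τ δ = -δ)
    (hΔns : ¬ IsSquare ((Δ : F)))
    (hOE : ∀ z : E, z ∈ OE ↔ ∃ a b : OF,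
      z = algebraMap F E (a : F) + algebraMap F E (b : F) * δ)
    (c : OF)
    (hcase : (IsUnit Δ ∧ Irreducible c) ∨ (Irreducible Δ ∧ c = 1)) :
    (∀ t : E, t * τ t = 1 → OE.valuation (t - 1) < 1 →
      ∃! x : OF,
        (1 + algebraMap F E (c : F) * δ * algebraMap F E (x : F)) /
          τ (1 + algebraMap F E (c : F) * δ * algebraMap F E (x : F)) = t) ∧
    (∀ x : OF,
      (1 + algebraMap F E (c : F) * δ * algebraMap F E (x : F)) /
          τ (1 + algebraMap F E (c : F) * δ * algebraMap F E (x : F)) = 1 → x = 0) :=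
  stmt_19_general hp hp2 OF OE hpF τ δ Δ hδ hτδ hΔns hOE c hcase
end
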